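/- The number of natural numbers at most n that are NOT squarefree is (1 - 1/ζ(2))·n + o(n). -/

import Mathlib

/-!
Writing `m = b² a` with `a` squarefree, the `d` with `d² ∣ m` are exactly the divisors of `b`, so
`∑_{d² ∣ m} μ d` is the indicator of `m` being squarefree. Summing over `m ≤ n` gives
`#{m ≤ n squarefree} = ∑_{d ≤ n} μ d ⌊n / d²⌋`; after dividing by `n`, dominated convergence
(with bound `1 / d²`) turns this into `∑ μ d / d² = 1 / ζ(2) = 6 / π²`.
-/

open Filter Finset
open scoped ArithmeticFunction.Moebius

theorem Nat.dvd_of_sq_dvd_sq_mul_of_squarefree {a b d : ℕ} (ha : Squarefree a)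
    (h : d ^ 2 ∣ b ^ 2 * a) : d ∣ b := by
  rcases eq_or_ne b 0 with rfl | hb
  · exact dvd_zero d
  have ha0 := ha.ne_zero
  have hd : d ≠ 0 := by rintro rfl; simp [hb, ha0] at h
  rw [← Nat.factorization_le_iff_dvd hd hb]
  intro p
  have hp := (Nat.factorization_le_iff_dvd (by positivity) (by positivity)).2 h p
  simp only [Nat.factorization_mul (pow_ne_zero 2 hb) ha0, Nat.factorization_pow,
    Finsupp.add_apply, Finsupp.smul_apply, smul_eq_mul] at hp
  have := ha.natFactorization_le_one p
  omega

theorem ArithmeticFunction.sum_divisors_moebius (n : ℕ) :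
    ∑ d ∈ n.divisors, μ d = if n = 1 then 1 else 0 := by
  rw [← coe_mul_zeta_apply, moebius_mul_coe_zeta, one_apply]

theorem ArithmeticFunction.sum_divisors_filter_sq_dvd_moebius {m : ℕ} (hm : m ≠ 0) :
    ∑ d ∈ m.divisors with d ^ 2 ∣ m, μ d = if Squarefree m then 1 else 0 := by
  obtain ⟨a, b, rfl, ha⟩ := Nat.sq_mul_squarefree m
  have hb : b ≠ 0 := by rintro rfl; simp at hm
  have hdivisors : {d ∈ (b ^ 2 * a).divisors | d ^ 2 ∣ b ^ 2 * a} = b.divisors := by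
    ext d
    simp only [mem_filter, Nat.mem_divisors]
    constructor
    · rintro ⟨-, h⟩
      exact ⟨Nat.dvd_of_sq_dvd_sq_mul_of_squarefree ha h, hb⟩
    · rintro ⟨h, -⟩
      have h2 : d ^ 2 ∣ b ^ 2 * a := (pow_dvd_pow_of_dvd h 2).mul_right a
      exact ⟨⟨(dvd_pow_self d two_ne_zero).trans h2, hm⟩, h2⟩
  have hsq : Squarefree (b ^ 2 * a) ↔ b = 1 := by
    refine ⟨fun h => Nat.isUnit_iff.mp (h b ⟨a, by ring⟩), ?_⟩
    rintro rfl
    simpa using ha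
  simp only [hdivisors, sum_divisors_moebius, hsq]

theorem card_filter_squarefree_Icc_eq_sum_moebius (n : ℕ) :
    (#{m ∈ Icc 1 n | Squarefree m} : ℤ) = ∑ d ∈ Icc 1 n, μ d * (n / d ^ 2 : ℕ) := by
  calc (#{m ∈ Icc 1 n | Squarefree m} : ℤ)
      = ∑ m ∈ Icc 1 n, ∑ d ∈ m.divisors with d ^ 2 ∣ m, μ d := by
        rw [natCast_card_filter]
        refine sum_congr rfl fun m hm => ?_
        rw [ArithmeticFunction.sum_divisors_filter_sq_dvd_moebius (by grind)]
    _ = ∑ d ∈ Icc 1 n, ∑ m ∈ Icc 1 n with d ^ 2 ∣ m, μ d := by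
        refine sum_comm' fun m d => ?_
        simp only [mem_filter, Nat.mem_divisors, mem_Icc]
        constructor
        · rintro ⟨hm, ⟨hdm, -⟩, hsq⟩
          exact ⟨⟨hm, hsq⟩, Nat.pos_of_dvd_of_pos hdm hm.1, (Nat.le_of_dvd hm.1 hdm).trans hm.2⟩
        · rintro ⟨⟨hm, hsq⟩, -⟩
          exact ⟨hm, ⟨(dvd_pow_self d two_ne_zero).trans hsq, by omega⟩, hsq⟩
    _ = ∑ d ∈ Icc 1 n, μ d * (n / d ^ 2 : ℕ) := by
        refine sum_congr rfl fun d _ => ?_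
        rw [sum_const, nsmul_eq_mul, mul_comm, ← Nat.Ioc_filter_dvd_card_eq_div,
          ← Icc_add_one_left_eq_Ioc, zero_add]

theorem tendsto_nat_div_div_atTop (k : ℕ) :
    Tendsto (fun n : ℕ => ((n / k : ℕ) : ℝ) / n) atTop (nhds (1 / k)) := by
  rcases eq_or_ne k 0 with rfl | hk
  · simp -- junk values: `n / 0 = 0` in `ℕ` and `1 / 0 = 0` in `ℝ`
  have hk' : (0 : ℝ) < k := by positivity
  have hfloor : Tendsto (fun n : ℕ => (⌊(n : ℝ) / k⌋₊ : ℝ) / ((n : ℝ) / k)) atTop (nhds 1) :=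
    tendsto_nat_floor_div_atTop.comp (tendsto_natCast_atTop_atTop.atTop_div_const hk')
  convert hfloor.mul_const (1 / (k : ℝ)) using 2 with n
  · rw [Nat.floor_div_eq_div]
    field_simp
  · simp

theorem tendsto_tsum_mul_nat_div_sq_div_atTop {a : ℕ → ℝ} {C : ℝ} (ha : ∀ d, |a d| ≤ C) :
    Tendsto (fun n : ℕ => ∑' d, a d * ((n / d ^ 2 : ℕ) : ℝ) / n) atTop
      (nhds (∑' d, a d / d ^ 2)) := by
  have hC : 0 ≤ C := (abs_nonneg _).trans (ha 0)
  refine tendsto_tsum_of_dominated_convergence (bound := fun d => C / d ^ 2) ?_ (fun d => ?_)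
    (Eventually.of_forall fun n d => ?_)
  · simpa only [mul_one_div] using
      (Real.summable_one_div_nat_pow.mpr one_lt_two).mul_left C
  · have h := (tendsto_nat_div_div_atTop (d ^ 2)).const_mul (a d)
    rw [Nat.cast_pow, ← div_eq_mul_one_div] at h
    simpa only [mul_div_assoc] using h
  · rcases eq_or_ne n 0 with rfl | hn
    · simp only [Nat.cast_zero, div_zero, norm_zero]
      positivity
    calc ‖a d * ((n / d ^ 2 : ℕ) : ℝ) / n‖ = |a d| * ((n / d ^ 2 : ℕ) : ℝ) / n := by
          rw [Real.norm_eq_abs, abs_div, abs_mul, Nat.abs_cast, Nat.abs_cast]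
      _ ≤ C * ((n : ℝ) / d ^ 2) / n := by
          gcongr
          · exact ha d
          · exact_mod_cast Nat.cast_div_le
      _ = C / d ^ 2 := by field_simp

open scoped LSeries.notation in
theorem ArithmeticFunction.LSeries_moebius_eq_inv_riemannZeta {s : ℂ} (hs : 1 < s.re) :
    L ↗μ s = (riemannZeta s)⁻¹ :=
  eq_inv_of_mul_eq_one_right (LSeries_zeta_eq_riemannZeta hs ▸ LSeries_zeta_mul_Lseries_moebius hs)

theorem tsum_moebius_div_sq : ∑' d : ℕ, (μ d : ℝ) / d ^ 2 = 6 / Real.pi ^ 2 := by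
  have h := ArithmeticFunction.LSeries_moebius_eq_inv_riemannZeta (s := 2) (by norm_num)
  rw [riemannZeta_two, inv_div, LSeries] at h
  apply Complex.ofReal_injective
  push_cast
  rw [← h]
  refine tsum_congr fun d => ?_
  rcases eq_or_ne d 0 with rfl | hd
  · simp
  · simp [LSeries.term_of_ne_zero hd]

theorem tendsto_card_filter_squarefree_div :
    Tendsto (fun n : ℕ => (#{m ∈ Icc 1 n | Squarefree m} : ℝ) / n) atTop
      (nhds (6 / Real.pi ^ 2)) := by
  rw [← tsum_moebius_div_sq]
  refine (tendsto_tsum_mul_nat_div_sq_div_atTop (C := 1)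
    fun d => by exact_mod_cast ArithmeticFunction.abs_moebius_le_one).congr fun n => ?_
  have hvanish : ∀ d ∉ Icc 1 n, (μ d : ℝ) * ((n / d ^ 2 : ℕ) : ℝ) / n = 0 := by
    intro d hd
    suffices n / d ^ 2 = 0 by simp [this]
    rcases Nat.eq_zero_or_pos d with rfl | hd0
    · simp
    have hnd : n < d := by grind
    exact Nat.div_eq_of_lt (hnd.trans_le (Nat.le_self_pow two_ne_zero d))
  rw [tsum_eq_sum hvanish, ← sum_div]
  have hcount := congrArg (Int.cast : ℤ → ℝ) (card_filter_squarefree_Icc_eq_sum_moebius n)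
  simp only [Int.cast_natCast, Int.cast_sum, Int.cast_mul] at hcount
  rw [hcount]

theorem non_squarefree_count_asymptotic :
    Tendsto (fun n : ℕ =>
        (((Finset.Icc 1 n).filter (fun m => ¬ Squarefree m)).card : ℝ) / n)
      atTop (nhds (1 - 6 / Real.pi ^ 2)) := by
  refine (tendsto_card_filter_squarefree_div.const_sub 1).congr' ?_
  filter_upwards [eventually_ne_atTop 0] with n hn
  have hsplit := card_filter_add_card_filter_not (s := Icc 1 n) (fun m => Squarefree m)
  rw [Nat.card_Icc, Nat.add_sub_cancel] at hsplit
  have hcomplement : (#{m ∈ Icc 1 n | ¬Squarefree m} : ℝ) = n - #{m ∈ Icc 1 n | Squarefree m} := by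
    have := congrArg (Nat.cast : ℕ → ℝ) hsplit
    push_cast at this
    linarith
  rw [hcomplement, sub_div, div_self (Nat.cast_ne_zero.mpr hn)]
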